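/- Let Ψ ∈ ℝ^{M×K} be a matrix whose restricted isometry constant δ_{2s} satisfies δ_{2s} < √2 − 1, let c̄ ∈ ℝ^K be s-sparse, and let y = Ψc̄ (noiseless measurements). Then c̄ is the unique minimizer of ‖c‖₁ over the set {c ∈ ℝ^K : Ψc = y}; i.e., the recovery by ℓ₁ minimization is exact. -/

import Mathlib

/-
The RIP of order `2s` with `δ < √2 - 1` yields the null space property of order `s`: every
nonzero `h ∈ ker Ψ` has `‖h_T‖₁ < ‖h_Tᶜ‖₁` whenever `|T| ≤ s`. Then for `c ≠ c̄` with `Ψ c = Ψ c̄`,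
taking `T = supp c̄` and `h = c - c̄` gives `‖c‖₁ ≥ ‖c̄‖₁ - ‖h_T‖₁ + ‖h_Tᶜ‖₁ > ‖c̄‖₁`.

For the null space property (Candès), suppose `‖h_Tᶜ‖₁ ≤ ‖h_T‖₁`. Peeling off the `s` largest
entries again and again writes `h_Tᶜ = h_T₁ + ∑ⱼ wⱼ` with `s`-sparse `wⱼ` supported off `T ∪ T₁`
and `√s ∑ⱼ ‖wⱼ‖₂ ≤ ‖h_Tᶜ‖₁ ≤ ‖h_T‖₁ ≤ √s ‖h_T‖₂`, since every entry of a block is at most the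
mean of the previous one. As `Ψ (h_T + h_T₁) = -∑ⱼ Ψ wⱼ`, polarizing the RIP bounds
`‖Ψ (h_T + h_T₁)‖₂²` above by `δ (‖h_T‖₂ + ‖h_T₁‖₂) ‖h_T‖₂`, while the RIP bounds it below by
`(1 - δ) (‖h_T‖₂² + ‖h_T₁‖₂²)`. For `δ < √2 - 1` this forces `h_T = 0`, hence `h = 0`.
-/

open Finset

/-- Squared Euclidean (ℓ₂) norm. -/
noncomputable def l2sq {n : Type*} [Fintype n] (x : n → ℝ) : ℝ := ∑ i, (x i) ^ 2

/-- ℓ₁ norm. -/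
noncomputable def l1 {n : Type*} [Fintype n] (x : n → ℝ) : ℝ := ∑ i, |x i|

/-- ℓ₀ "norm": number of nonzero entries. -/
noncomputable def l0 {n : Type*} [Fintype n] (x : n → ℝ) : ℕ := Set.ncard {i | x i ≠ 0}

open Function Matrix

variable {m n : Type*}

lemma support_indicator_compl (T : Finset n) (x : n → ℝ) :
    support (Set.indicator (↑T)ᶜ x) = support x \ T := by
  rw [Set.support_indicator, Set.sdiff_eq, Set.inter_comm]

lemma exists_mem_ne_zero_of_mul_abs_le_sum {v : n → ℝ} {s : ℕ} {T : Finset n} (hs : 0 < s)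
    (hv : v ≠ 0) (h : ∀ i ∉ T, s * |v i| ≤ ∑ j ∈ T, |v j|) : ∃ j ∈ T, v j ≠ 0 := by
  obtain ⟨i, hi⟩ := Function.ne_iff.1 hv
  by_cases hiT : i ∈ T
  · exact ⟨i, hiT, hi⟩
  · have hpos : 0 < ∑ j ∈ T, |v j| :=
      (h i hiT).trans_lt' (mul_pos (Nat.cast_pos.2 hs) (abs_pos.2 hi))
    obtain ⟨j, hjT, hj⟩ := exists_ne_zero_of_sum_ne_zero hpos.ne'
    exact ⟨j, hjT, abs_ne_zero.1 hj⟩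

variable [Fintype n]

noncomputable def l2 (x : n → ℝ) : ℝ := √(l2sq x)

lemma l2sq_nonneg (x : n → ℝ) : 0 ≤ l2sq x :=
  sum_nonneg fun i _ => sq_nonneg (x i)

lemma l1_nonneg (x : n → ℝ) : 0 ≤ l1 x :=
  sum_nonneg fun i _ => abs_nonneg (x i)

lemma l2_nonneg (x : n → ℝ) : 0 ≤ l2 x := Real.sqrt_nonneg _

lemma sq_l2 (x : n → ℝ) : l2 x ^ 2 = l2sq x := Real.sq_sqrt (l2sq_nonneg x)

lemma l2sq_eq_zero_iff {x : n → ℝ} : l2sq x = 0 ↔ x = 0 := by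
  rw [l2sq, Fintype.sum_eq_zero_iff_of_nonneg fun i => sq_nonneg (x i)]
  simp [funext_iff]

lemma l2_eq_zero_iff {x : n → ℝ} : l2 x = 0 ↔ x = 0 := by
  rw [l2, Real.sqrt_eq_zero (l2sq_nonneg x), l2sq_eq_zero_iff]

lemma l1_eq_zero_iff {x : n → ℝ} : l1 x = 0 ↔ x = 0 := by
  rw [l1, Fintype.sum_eq_zero_iff_of_nonneg fun i => abs_nonneg (x i)]
  simp [funext_iff]

lemma l2sq_smul (a : ℝ) (x : n → ℝ) : l2sq (a • x) = a ^ 2 * l2sq x := by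
  simp [l2sq, mul_sum, mul_pow]

lemma l2sq_eq_dotProduct (x : n → ℝ) : l2sq x = x ⬝ᵥ x := by
  simp [l2sq, dotProduct, sq]

lemma l2sq_add_of_disjoint {x y : n → ℝ} (h : Disjoint (support x) (support y)) :
    l2sq (x + y) = l2sq x + l2sq y := by
  rw [l2sq, l2sq, l2sq, ← sum_add_distrib]
  refine sum_congr rfl fun i _ => ?_
  by_cases hx : x i = 0
  · simp [hx]
  · have hy : y i = 0 := by simpa using Set.disjoint_left.1 h hx
    simp [hy]

lemma l0_eq_card_filter (x : n → ℝ) : l0 x = #{i | x i ≠ 0} := by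
  rw [l0, ← Set.ncard_coe_finset]
  congr
  ext
  simp

lemma l0_le_of_support_subset {x y : n → ℝ} (h : support x ⊆ support y) : l0 x ≤ l0 y :=
  Set.ncard_le_ncard h

lemma l0_add_le (x y : n → ℝ) : l0 (x + y) ≤ l0 x + l0 y :=
  (Set.ncard_le_ncard (support_add x y)).trans (Set.ncard_union_le _ _)

lemma l0_smul_le (a : ℝ) (x : n → ℝ) : l0 (a • x) ≤ l0 x :=
  l0_le_of_support_subset (support_const_smul_subset a x)

lemma l0_indicator_le (T : Finset n) (x : n → ℝ) : l0 (Set.indicator T x) ≤ #T := by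
  rw [← Set.ncard_coe_finset]
  exact Set.ncard_le_ncard Set.support_indicator_subset

lemma l0_indicator_compl_lt {T : Finset n} {x : n → ℝ} (h : ∃ j ∈ T, x j ≠ 0) :
    l0 (Set.indicator (↑T)ᶜ x) < l0 x := by
  obtain ⟨j, hjT, hj⟩ := h
  refine Set.ncard_lt_ncard (show support _ ⊂ support x from ?_)
  rw [support_indicator_compl]
  exact Set.sdiff_ssubset_left_iff.2 ⟨j, hj, hjT⟩

lemma l1_indicator (T : Finset n) (x : n → ℝ) : l1 (Set.indicator T x) = ∑ i ∈ T, |x i| := by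
  classical
  simp only [l1, Set.indicator_apply, mem_coe, apply_ite, abs_zero]
  rw [sum_ite_mem, univ_inter]

lemma l1_eq_sum_filter (x : n → ℝ) : l1 x = ∑ i with x i ≠ 0, |x i| :=
  (sum_filter_of_ne (p := (x · ≠ 0)) fun _ _ hi => abs_ne_zero.1 hi).symm

lemma l2sq_eq_sum_filter (x : n → ℝ) : l2sq x = ∑ i with x i ≠ 0, |x i| ^ 2 := by
  simp only [l2sq, sq_abs]
  exact (sum_filter_of_ne (p := (x · ≠ 0)) fun _ _ hi => by simpa using hi).symm

lemma l1_sq_le_l0_mul_l2sq (x : n → ℝ) : l1 x ^ 2 ≤ l0 x * l2sq x := by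
  rw [l1_eq_sum_filter, l2sq_eq_sum_filter, l0_eq_card_filter]
  exact sq_sum_le_card_mul_sum_sq

lemma l2sq_le_l0_mul_sq {x : n → ℝ} {c : ℝ} (h : ∀ i, |x i| ≤ c) : l2sq x ≤ l0 x * c ^ 2 :=
  calc l2sq x = ∑ i with x i ≠ 0, |x i| ^ 2 := l2sq_eq_sum_filter x
    _ ≤ ∑ i with x i ≠ 0, c ^ 2 := sum_le_sum fun i _ => pow_le_pow_left₀ (abs_nonneg _) (h i) 2
    _ = l0 x * c ^ 2 := by rw [sum_const, nsmul_eq_mul, l0_eq_card_filter]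

lemma l1_le_sqrt_mul_l2 {x : n → ℝ} {s : ℕ} (hx : l0 x ≤ s) : l1 x ≤ √s * l2 x := by
  rw [l2, ← Real.sqrt_mul (Nat.cast_nonneg s)]
  refine Real.le_sqrt_of_sq_le ((l1_sq_le_l0_mul_l2sq x).trans ?_)
  gcongr
  exact l2sq_nonneg x

lemma sqrt_mul_l2_le {x : n → ℝ} {s : ℕ} {M : ℝ} (hs : 0 < s) (hM : 0 ≤ M) (hx : l0 x ≤ s)
    (h : ∀ i, s * |x i| ≤ M) : √s * l2 x ≤ M := by
  have hs' : (0 : ℝ) < s := Nat.cast_pos.2 hs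
  have hbound : l2sq x ≤ l0 x * (M / s) ^ 2 :=
    l2sq_le_l0_mul_sq fun i => (le_div_iff₀' hs').2 (h i)
  rw [l2, ← Real.sqrt_mul hs'.le, Real.sqrt_le_left hM]
  calc s * l2sq x ≤ s * (s * (M / s) ^ 2) := by
        gcongr
        exact hbound.trans (by gcongr)
    _ = M ^ 2 := by field_simp

lemma exists_card_le_and_mul_abs_le_sum (v : n → ℝ) (s : ℕ) :
    ∃ T : Finset n, #T ≤ s ∧ ∀ i ∉ T, s * |v i| ≤ ∑ j ∈ T, |v j| := by
  classical
  obtain ⟨T, hT, hmax⟩ := exists_max_image {T ∈ univ.powerset | #T ≤ s}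
    (fun T => ∑ j ∈ T, |v j|) ⟨∅, by simp⟩
  simp only [mem_filter, mem_powerset, subset_univ, true_and] at hT hmax
  refine ⟨T, hT, fun i hi => ?_⟩
  rcases hT.lt_or_eq with hlt | rfl
  · have hgrow := hmax (insert i T) ((card_insert_of_notMem hi).trans_le hlt)
    rw [sum_insert hi] at hgrow
    have hvi : |v i| = 0 := le_antisymm (by linarith) (abs_nonneg _)
    rw [hvi, mul_zero]
    exact sum_nonneg fun j _ => abs_nonneg _
  · rw [← nsmul_eq_mul]
    refine card_nsmul_le_sum _ _ _ fun j hj => ?_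
    have hi' : i ∉ T.erase j := fun h => hi (mem_of_mem_erase h)
    have hswap := hmax (insert i (T.erase j)) (by
      rw [card_insert_of_notMem hi', card_erase_of_mem hj]
      have := card_pos.2 ⟨j, hj⟩
      omega)
    rw [sum_insert hi', ← sum_erase_add _ _ hj] at hswap
    linarith

theorem exists_sparse_decomposition {s : ℕ} (hs : 0 < s) (v : n → ℝ) :
    ∃ T : Finset n, #T ≤ s ∧ ∃ (k : ℕ) (w : Fin k → n → ℝ),
      v = Set.indicator T v + ∑ j, w j ∧
      (∀ j, l0 (w j) ≤ s ∧ support (w j) ⊆ support v \ T) ∧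
      √s * ∑ j, l2 (w j) ≤ l1 v := by
  classical
  induction hN : l0 v using Nat.strong_induction_on generalizing v with
  | _ N ih =>
  by_cases hv : v = 0
  · subst hv
    exact ⟨∅, by simp, 0, Fin.elim0, by simp, fun j => j.elim0, by simp [l1]⟩
  obtain ⟨T, hT, hheavy⟩ := exists_card_le_and_mul_abs_le_sum v s
  set v' := Set.indicator (↑T)ᶜ v with hv'
  have hsupp : support v' = support v \ T := support_indicator_compl T v
  have hv'_le (j : n) : s * |v' j| ≤ ∑ j ∈ T, |v j| := by
    by_cases hj : j ∈ T
    · simpa [v', hj] using sum_nonneg fun j _ => abs_nonneg (v j)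
    · simpa [v', hj] using hheavy j hj
  obtain ⟨T', hT', k, w, hv'_eq, hw, hw_sum⟩ :=
    ih _ (hN ▸ l0_indicator_compl_lt (exists_mem_ne_zero_of_mul_abs_le_sum hs hv hheavy)) v' rfl
  refine ⟨T, hT, k + 1, Fin.cons (Set.indicator T' v') w, ?_, ?_, ?_⟩
  · rw [Fin.sum_univ_succ, Fin.cons_zero]
    simp only [Fin.cons_succ]
    rw [← hv'_eq, hv', Set.indicator_self_add_compl]
  · refine Fin.cases ⟨(l0_indicator_le _ _).trans hT', ?_⟩ fun j => ⟨(hw j).1, ?_⟩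
    · rw [Fin.cons_zero, ← hsupp, Set.support_indicator]
      exact Set.inter_subset_right
    · rw [Fin.cons_succ, ← hsupp]
      exact (hw j).2.trans Set.sdiff_subset
  · have hl1 : l1 v = ∑ j ∈ T, |v j| + l1 v' := by
      rw [hv', ← coe_compl, l1_indicator, sum_add_sum_compl, l1]
    have hhead : √s * l2 (Set.indicator T' v') ≤ ∑ j ∈ T, |v j| := by
      refine sqrt_mul_l2_le hs (sum_nonneg fun j _ => abs_nonneg _)
        ((l0_indicator_le _ _).trans hT') fun j => (hv'_le j).trans' ?_
      refine mul_le_mul_of_nonneg_left ?_ (Nat.cast_nonneg s)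
      simpa only [Real.norm_eq_abs] using norm_indicator_le_norm_self v' j
    rw [Fin.sum_univ_succ, Fin.cons_zero]
    simp only [Fin.cons_succ]
    linarith

def NullSpaceProperty (Ψ : Matrix m n ℝ) (s : ℕ) : Prop :=
  ∀ h : n → ℝ, Ψ *ᵥ h = 0 → h ≠ 0 → ∀ T : Finset n, #T ≤ s →
    l1 (Set.indicator T h) < l1 (Set.indicator (↑T)ᶜ h)

theorem NullSpaceProperty.l1_lt {Ψ : Matrix m n ℝ} {s : ℕ} (hΨ : NullSpaceProperty Ψ s)
    {cbar : n → ℝ} (hcbar : l0 cbar ≤ s)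
    (c : n → ℝ) (hc : Ψ *ᵥ c = Ψ *ᵥ cbar) (hne : c ≠ cbar) : l1 cbar < l1 c := by
  classical
  set T : Finset n := {i | cbar i ≠ 0}
  have hout (i : n) (hi : i ∉ T) : cbar i = 0 := by simpa [T] using hi
  have hnsp := hΨ (c - cbar) (by rw [mulVec_sub, hc, sub_self]) (sub_ne_zero.2 hne) T
    (l0_eq_card_filter cbar ▸ hcbar)
  rw [l1_indicator, ← coe_compl, l1_indicator] at hnsp
  calc l1 cbar = ∑ i ∈ T, |cbar i| :=
        (sum_subset (subset_univ T) fun i _ hi => by simp [hout i hi]).symm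
    _ ≤ ∑ i ∈ T, (|c i| + |(c - cbar) i|) :=
        sum_le_sum fun i _ => by
          rw [Pi.sub_apply, abs_sub_comm, add_comm]
          simpa using abs_sub_le (cbar i) (c i) 0
    _ < ∑ i ∈ T, |c i| + ∑ i ∈ Tᶜ, |(c - cbar) i| := by
        rw [sum_add_distrib]
        gcongr
    _ = l1 c := by
        rw [l1, ← sum_add_sum_compl T]
        congr 1
        exact sum_congr rfl fun i hi => by simp [hout i (mem_compl.1 hi)]

lemma eq_zero_of_one_sub_mul_sq_add_sq_le {δ a b : ℝ} (hδ₀ : 0 ≤ δ) (hδ : δ < √2 - 1)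
    (h : (1 - δ) * (a ^ 2 + b ^ 2) ≤ δ * (a + b) * a) : a = 0 := by
  have h2 : √2 ^ 2 = 2 := Real.sq_sqrt zero_le_two
  have hquad : 2 * (a ^ 2 + a * b) ≤ (1 + √2) * (a ^ 2 + b ^ 2) := by
    nlinarith [sq_nonneg ((√2 - 1) * a - b), Real.sqrt_nonneg 2]
  have hcoef : 0 < 2 - (3 + √2) * δ := by nlinarith [Real.sqrt_nonneg 2]
  have hG : (2 - (3 + √2) * δ) * (a ^ 2 + b ^ 2) ≤ 0 := by
    nlinarith [mul_le_mul_of_nonneg_left hquad hδ₀]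
  have : a ^ 2 + b ^ 2 ≤ 0 := nonpos_of_mul_nonpos_right hG hcoef
  nlinarith [sq_nonneg b]

section RestrictedIsometry

variable [Fintype m]

def RestrictedIsometry (Ψ : Matrix m n ℝ) (k : ℕ) (δ : ℝ) : Prop :=
  ∀ c : n → ℝ, l0 c ≤ k →
    (1 - δ) * l2sq c ≤ l2sq (Ψ *ᵥ c) ∧ l2sq (Ψ *ᵥ c) ≤ (1 + δ) * l2sq c

variable {Ψ : Matrix m n ℝ} {δ : ℝ} {s : ℕ}

theorem RestrictedIsometry.abs_dotProduct_mulVec_le {k l : ℕ} (hΨ : RestrictedIsometry Ψ (k + l) δ)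
    {x y : n → ℝ} (hxy : Disjoint (support x) (support y)) (hx : l0 x ≤ k) (hy : l0 y ≤ l) :
    |Ψ *ᵥ x ⬝ᵥ Ψ *ᵥ y| ≤ δ * l2 x * l2 y := by
  rcases (l2_nonneg x).eq_or_lt with ha | ha
  · rw [eq_comm, l2_eq_zero_iff] at ha
    simp [ha, l2, l2sq]
  rcases (l2_nonneg y).eq_or_lt with hb | hb
  · rw [eq_comm, l2_eq_zero_iff] at hb
    simp [hb, l2, l2sq]
  set a := l2 x
  set b := l2 y
  set p := Ψ *ᵥ x ⬝ᵥ Ψ *ᵥ y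
  -- polarization: apply the RIP to `b • x ± a • y`, whose squared norms are both `2 a² b²`
  have hsq (t : ℝ) : l2sq (b • x + t • y) = b ^ 2 * a ^ 2 + t ^ 2 * b ^ 2 := by
    have hd : Disjoint (support (b • x)) (support (t • y)) :=
      hxy.mono (support_const_smul_subset b x) (support_const_smul_subset t y)
    rw [l2sq_add_of_disjoint hd, l2sq_smul, l2sq_smul, sq_l2, sq_l2]
  have himage (t : ℝ) : l2sq (Ψ *ᵥ (b • x + t • y)) =
      b ^ 2 * l2sq (Ψ *ᵥ x) + 2 * b * t * p + t ^ 2 * l2sq (Ψ *ᵥ y) := by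
    simp only [p, mulVec_add, mulVec_smul, l2sq_eq_dotProduct, add_dotProduct,
      dotProduct_add, smul_dotProduct, dotProduct_smul, dotProduct_comm (Ψ *ᵥ y), smul_eq_mul]
    ring
  have hrip (t : ℝ) := hΨ (b • x + t • y)
    ((l0_add_le _ _).trans (add_le_add ((l0_smul_le _ _).trans hx) ((l0_smul_le _ _).trans hy)))
  obtain ⟨hlo_pos, hup_pos⟩ := hrip a
  obtain ⟨hlo_neg, hup_neg⟩ := hrip (-a)
  rw [hsq, himage] at hlo_pos hup_pos hlo_neg hup_neg
  have hab : 0 < 4 * (a * b) := by positivity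
  rw [abs_le]
  constructor
  · refine le_of_mul_le_mul_left ?_ hab
    nlinarith
  · refine le_of_mul_le_mul_left ?_ hab
    nlinarith

theorem RestrictedIsometry.l2sq_mulVec_add_le {k l : ℕ} (hΨ : RestrictedIsometry Ψ (k + l) δ)
    {x₀ x₁ : n → ℝ} {ι : Type*} [Fintype ι] {w : ι → n → ℝ}
    (hker : Ψ *ᵥ (x₀ + x₁ + ∑ j, w j) = 0) (hx₀ : l0 x₀ ≤ k) (hx₁ : l0 x₁ ≤ k)
    (hw : ∀ j, l0 (w j) ≤ l) (hd₀ : ∀ j, Disjoint (support x₀) (support (w j)))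
    (hd₁ : ∀ j, Disjoint (support x₁) (support (w j))) :
    l2sq (Ψ *ᵥ (x₀ + x₁)) ≤ δ * (l2 x₀ + l2 x₁) * ∑ j, l2 (w j) := by
  have hΨg : Ψ *ᵥ (x₀ + x₁) = -∑ j, Ψ *ᵥ w j := by
    rw [mulVec_add _ (x₀ + x₁), mulVec_sum] at hker
    exact eq_neg_of_add_eq_zero_left hker
  calc l2sq (Ψ *ᵥ (x₀ + x₁)) = -∑ j, Ψ *ᵥ (x₀ + x₁) ⬝ᵥ Ψ *ᵥ w j := by
        rw [l2sq_eq_dotProduct]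
        nth_rw 2 [hΨg]
        rw [dotProduct_neg, dotProduct_sum]
    _ ≤ ∑ j, |Ψ *ᵥ (x₀ + x₁) ⬝ᵥ Ψ *ᵥ w j| := (neg_le_abs _).trans (abs_sum_le_sum_abs _ _)
    _ ≤ ∑ j, (δ * l2 x₀ * l2 (w j) + δ * l2 x₁ * l2 (w j)) := by
        refine sum_le_sum fun j _ => ?_
        rw [mulVec_add, add_dotProduct]
        exact (abs_add_le _ _).trans (add_le_add (hΨ.abs_dotProduct_mulVec_le (hd₀ j) hx₀ (hw j))
          (hΨ.abs_dotProduct_mulVec_le (hd₁ j) hx₁ (hw j)))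
    _ = δ * (l2 x₀ + l2 x₁) * ∑ j, l2 (w j) := by
        rw [mul_sum]
        exact sum_congr rfl fun j _ => by ring

theorem RestrictedIsometry.indicator_eq_zero_of_cone (hΨ : RestrictedIsometry Ψ (2 * s) δ)
    (hδ₀ : 0 ≤ δ) (hδ : δ < √2 - 1) (hs : 0 < s) {h : n → ℝ} (hker : Ψ *ᵥ h = 0)
    {T : Finset n} (hT : #T ≤ s)
    (hcone : l1 (Set.indicator (↑T)ᶜ h) ≤ l1 (Set.indicator T h)) :
    Set.indicator T h = 0 := by
  obtain ⟨T₁, hT₁, k, w, hdecomp, hw, hw_sum⟩ :=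
    exists_sparse_decomposition hs (Set.indicator (↑T)ᶜ h)
  set x₀ := Set.indicator T h
  set x₁ := Set.indicator T₁ (Set.indicator (↑T)ᶜ h)
  have hsupp₀ : support x₀ ⊆ T := Set.support_indicator_subset
  have hsupp₁ : support x₁ ⊆ (↑T)ᶜ ∩ T₁ := by
    rw [Set.support_indicator, Set.inter_comm]
    exact Set.inter_subset_inter_left _ Set.support_indicator_subset
  have hsupp_w (j : Fin k) : support (w j) ⊆ (↑T)ᶜ \ ↑T₁ :=
    (hw j).2.trans (Set.sdiff_subset_sdiff_left Set.support_indicator_subset)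
  have hd₀ (j : Fin k) : Disjoint (support x₀) (support (w j)) :=
    disjoint_compl_right.mono hsupp₀ ((hsupp_w j).trans Set.sdiff_subset)
  have hd₁ (j : Fin k) : Disjoint (support x₁) (support (w j)) :=
    Set.disjoint_sdiff_right.mono (hsupp₁.trans Set.inter_subset_right) (hsupp_w j)
  have hd : Disjoint (support x₀) (support x₁) :=
    disjoint_compl_right.mono hsupp₀ (hsupp₁.trans Set.inter_subset_left)
  have hker' : Ψ *ᵥ (x₀ + x₁ + ∑ j, w j) = 0 := by
    rw [add_assoc, ← hdecomp, Set.indicator_self_add_compl, hker]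
  have hx₀ : l0 x₀ ≤ s := (l0_indicator_le _ _).trans hT
  have hx₁ : l0 x₁ ≤ s := (l0_indicator_le _ _).trans hT₁
  have hupper := (two_mul s ▸ hΨ).l2sq_mulVec_add_le hker' hx₀ hx₁ (fun j => (hw j).1) hd₀ hd₁
  have hs' : 0 < √s := Real.sqrt_pos.2 (Nat.cast_pos.2 hs)
  have htail : ∑ j, l2 (w j) ≤ l2 x₀ :=
    le_of_mul_le_mul_left (hw_sum.trans (hcone.trans (l1_le_sqrt_mul_l2 hx₀))) hs'
  have hlower := (hΨ (x₀ + x₁) ((l0_add_le _ _).trans (by omega))).1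
  rw [l2sq_add_of_disjoint hd, ← sq_l2, ← sq_l2] at hlower
  refine l2_eq_zero_iff.1 (eq_zero_of_one_sub_mul_sq_add_sq_le (b := l2 x₁) hδ₀ hδ ?_)
  calc (1 - δ) * (l2 x₀ ^ 2 + l2 x₁ ^ 2) ≤ l2sq (Ψ *ᵥ (x₀ + x₁)) := hlower
    _ ≤ δ * (l2 x₀ + l2 x₁) * ∑ j, l2 (w j) := hupper
    _ ≤ δ * (l2 x₀ + l2 x₁) * l2 x₀ :=
        mul_le_mul_of_nonneg_left htail (mul_nonneg hδ₀ (add_nonneg (l2_nonneg _) (l2_nonneg _)))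

theorem RestrictedIsometry.nullSpaceProperty (hΨ : RestrictedIsometry Ψ (2 * s) δ)
    (hδ₀ : 0 ≤ δ) (hδ : δ < √2 - 1) : NullSpaceProperty Ψ s := by
  intro h hker hne T hT
  by_contra! hcone
  have hin : Set.indicator T h = 0 := by
    rcases s.eq_zero_or_pos with rfl | hs
    · rw [card_eq_zero.1 (Nat.le_zero.1 hT), coe_empty, Set.indicator_empty']
    · exact hΨ.indicator_eq_zero_of_cone hδ₀ hδ hs hker hT hcone
  have hout : Set.indicator (↑T)ᶜ h = 0 := by
    rw [hin, l1_eq_zero_iff.2 rfl] at hcone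
    exact l1_eq_zero_iff.1 (hcone.antisymm (l1_nonneg _))
  exact hne (by rw [← Set.indicator_self_add_compl T h, hin, hout, add_zero])

end RestrictedIsometry

/-- exact sparse recovery by ℓ₁ minimization under the RIP.
If the restricted isometry constant `δ_{2s}` of `Ψ` satisfies `δ_{2s} < √2 − 1`
(i.e. the RIP inequality of order `2s` holds for some constant `δ < √2 − 1`),
`c̄` is `s`-sparse and `y = Ψ c̄` is noiseless, then `c̄` is the unique minimizer
of `‖c‖₁` over `{c : Ψ c = y}`. -/
theorem rip_exact_l1_recovery {M K : ℕ} (s : ℕ) (Ψ : Matrix (Fin M) (Fin K) ℝ)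
    (hRIP : ∃ δ : ℝ, 0 < δ ∧ δ < Real.sqrt 2 - 1 ∧
      ∀ c : Fin K → ℝ, l0 c ≤ 2 * s →
        (1 - δ) * l2sq c ≤ l2sq (Ψ.mulVec c) ∧
          l2sq (Ψ.mulVec c) ≤ (1 + δ) * l2sq c)
    (cbar : Fin K → ℝ) (hsparse : l0 cbar ≤ s) :
    ∀ c : Fin K → ℝ, Ψ.mulVec c = Ψ.mulVec cbar → c ≠ cbar → l1 cbar < l1 c := by
  obtain ⟨δ, hδ₀, hδ, hΨ⟩ := hRIP
  exact (RestrictedIsometry.nullSpaceProperty hΨ hδ₀.le hδ).l1_lt hsparse
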